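/- arXiv:1505.04861 — 6 statements merged into one kernel-verified Lean document; each statement's English description precedes it below -/
import Mathlib

section
/- Let J be the 2n×2n complex block matrix [[0, -I],[I, 0]] and let R be a 2n×2n complex matrix such that J·R is Hermitian. Let Λ be an n×n complex matrix and Z a 2n×n complex matrix with R·Z = Z·Λ. If Λ and -Λ* have no common eigenvalue, then Z*·J·Z = 0. -/
open Matrix Polynomial

/-- Evaluating the characteristic polynomial at `μ` gives the determinant of
`μ•1 - A`. -/
lemma charpoly_eval_eq_det {m : Type*} [Fintype m] [DecidableEq m]
    (A : Matrix m m ℂ) (μ : ℂ) :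
    A.charpoly.eval μ = (algebraMap ℂ (Matrix m m ℂ) μ - A).det := by
  rw [Matrix.charpoly]
  have h1 : (evalRingHom μ) A.charmatrix.det = ((evalRingHom μ).mapMatrix A.charmatrix).det :=
    RingHom.map_det _ _
  rw [show A.charmatrix.det.eval μ = (evalRingHom μ) A.charmatrix.det from rfl, h1]
  congr 1
  ext i j
  by_cases h : i = j <;>
    simp [h, Matrix.charmatrix_apply, Matrix.algebraMap_matrix_apply,
      Matrix.diagonal_apply, Matrix.one_apply]

/-- A root of the characteristic polynomial is in the spectrum. -/
lemma mem_spectrum_of_charpoly_root {m : Type*} [Fintype m] [DecidableEq m]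
    (A : Matrix m m ℂ) (μ : ℂ) (h : A.charpoly.eval μ = 0) :
    μ ∈ spectrum ℂ A := by
  rw [spectrum.mem_iff]
  intro hu
  rw [Matrix.isUnit_iff_isUnit_det, isUnit_iff_ne_zero] at hu
  exact hu (by rw [← charpoly_eval_eq_det]; exact h)

/-- If `R` is J-Hamiltonian, `R·Z = Z·Λ`, and `Λ` and `-Λ*` have no common
eigenvalue, then `Z*·J·Z = 0`. -/
theorem hamiltonian_invariant_J_orthogonal (n : ℕ) (hn : 0 < n)
    (R : Matrix (Fin n ⊕ Fin n) (Fin n ⊕ Fin n) ℂ)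
    (hR : ((Matrix.fromBlocks 0 (-1) 1 0 : Matrix (Fin n ⊕ Fin n) (Fin n ⊕ Fin n) ℂ)
        * R).IsHermitian)
    (Λ : Matrix (Fin n) (Fin n) ℂ) (Z : Matrix (Fin n ⊕ Fin n) (Fin n) ℂ)
    (hZ : R * Z = Z * Λ)
    (hdisj : ∀ μ : ℂ, μ ∈ spectrum ℂ Λ → μ ∉ spectrum ℂ (-Λᴴ)) :
    Zᴴ * (Matrix.fromBlocks 0 (-1) 1 0 : Matrix (Fin n ⊕ Fin n) (Fin n ⊕ Fin n) ℂ) * Z = 0 := by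
  set J : Matrix (Fin n ⊕ Fin n) (Fin n ⊕ Fin n) ℂ := Matrix.fromBlocks 0 (-1) 1 0 with hJ
  set X : Matrix (Fin n) (Fin n) ℂ := Zᴴ * J * Z with hX
  -- Jᴴ = -J
  have hJH : Jᴴ = -J := by
    rw [hJ, Matrix.fromBlocks_conjTranspose]
    simp [Matrix.fromBlocks_neg]
  -- J * R = -(Rᴴ * J)
  have hJR : J * R = -(Rᴴ * J) := by
    have := hR.eq  -- (J*R)ᴴ = J*R
    rw [Matrix.conjTranspose_mul, hJH, Matrix.mul_neg] at this
    exact this.symm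
  -- the semiconjugacy  X * Λ = (-Λᴴ) * X
  have hsemi : X * Λ = (-Λᴴ) * X := by
    calc X * Λ = Zᴴ * J * (Z * Λ) := by rw [hX, Matrix.mul_assoc, Matrix.mul_assoc]
    _ = Zᴴ * (J * R * Z) := by rw [← hZ]; simp only [Matrix.mul_assoc]
    _ = Zᴴ * (-(Rᴴ * J) * Z) := by rw [hJR]
    _ = -((R * Z)ᴴ * J * Z) := by
          rw [Matrix.conjTranspose_mul]
          simp only [Matrix.neg_mul, Matrix.mul_neg, Matrix.mul_assoc]
    _ = -((Z * Λ)ᴴ * J * Z) := by rw [hZ]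
    _ = (-Λᴴ) * X := by
          rw [Matrix.conjTranspose_mul, hX]
          simp only [Matrix.neg_mul, Matrix.mul_assoc]
  -- powers
  have hpow : ∀ k : ℕ, X * Λ ^ k = (-Λᴴ) ^ k * X := by
    intro k
    induction k with
    | zero => simp
    | succ k ih =>
      rw [pow_succ, ← Matrix.mul_assoc, ih, Matrix.mul_assoc, hsemi,
        ← Matrix.mul_assoc, ← pow_succ]
  -- polynomials
  have haeval : ∀ p : ℂ[X], X * aeval Λ p = aeval (-Λᴴ) p * X := by
    intro p
    induction p using Polynomial.induction_on' with
    | add p q hp hq => rw [map_add, map_add, Matrix.mul_add, hp, hq, Matrix.add_mul]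
    | monomial k c =>
      rw [aeval_monomial, aeval_monomial, ← Matrix.mul_assoc,
        ← Algebra.commutes c X, Matrix.mul_assoc, hpow k, ← Matrix.mul_assoc]
  -- apply with the characteristic polynomial of Λ
  have hkey : aeval (-Λᴴ) Λ.charpoly * X = 0 := by
    rw [← haeval, Matrix.aeval_self_charpoly, Matrix.mul_zero]
  -- aeval (-Λᴴ) Λ.charpoly is a unit
  have hdeg : 0 < Λ.charpoly.degree := by
    rw [Matrix.charpoly_degree_eq_dim]
    simpa using hn
  have hunit : IsUnit (aeval (-Λᴴ) Λ.charpoly) := by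
    rw [← spectrum.zero_notMem_iff ℂ]
    rw [spectrum.map_polynomial_aeval_of_degree_pos (-Λᴴ) Λ.charpoly hdeg]
    rintro ⟨μ, hμ, hev⟩
    exact hdisj μ (mem_spectrum_of_charpoly_root Λ μ hev) hμ
  exact hunit.mul_left_cancel (hkey.trans (mul_zero _).symm)
end

section
/- Let A, G be n×n complex matrices with G Hermitian, B an n×m complex matrix, Γ an invertible m×m Hermitian complex matrix, and let R be the 2n×2n block matrix [[A, -BΓ⁻¹B*],[-G, -A*]]. Suppose X₁ and Ψ₁ are n×n complex matrices and Λ is an n×n complex matrix such that R·col(X₁, Ψ₁) = col(X₁, Ψ₁)·Λ (where col(X₁, Ψ₁) is the 2n×n matrix stacking X₁ on top of Ψ₁), the matrices Λ and -Λ* have no common eigenvalue, and X₁ is invertible. Then the matrix H = Ψ₁·X₁⁻¹ is Hermitian. -/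
open Matrix Polynomial

/-- A complex number is in the spectrum of a matrix iff it is a root of the
characteristic polynomial. -/
lemma mem_spectrum_iff_isRoot_charpoly {n : ℕ} (M : Matrix (Fin n) (Fin n) ℂ) (μ : ℂ) :
    μ ∈ spectrum ℂ M ↔ M.charpoly.IsRoot μ := by
  have heval : M.charpoly.eval μ = (algebraMap ℂ (Matrix (Fin n) (Fin n) ℂ) μ - M).det := by
    have : M.charpoly.eval μ = ((charmatrix M).map (evalRingHom μ)).det := by
      simpa [Matrix.charpoly, RingHom.mapMatrix_apply] using
        (evalRingHom μ).map_det (charmatrix M)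
    rw [this]
    congr 1
    ext i j
    by_cases h : i = j
    · subst h
      simp [charmatrix_apply_eq, Matrix.algebraMap_matrix_apply]
    · simp [charmatrix_apply_ne _ _ _ h, Matrix.algebraMap_matrix_apply, h]
  rw [spectrum.mem_iff, Matrix.isUnit_iff_isUnit_det, isUnit_iff_ne_zero, not_ne_iff,
    Polynomial.IsRoot.def, heval]

/-- From `A * W = W * B`, polynomial images intertwine as well. -/
lemma aeval_mul_eq_mul_aeval {n : ℕ} (A B W : Matrix (Fin n) (Fin n) ℂ)
    (h : A * W = W * B) (p : ℂ[X]) :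
    (aeval A p) * W = W * (aeval B p) := by
  have hpow : ∀ k : ℕ, A ^ k * W = W * B ^ k := by
    intro k
    induction k with
    | zero => simp
    | succ k ih =>
      rw [pow_succ, pow_succ, mul_assoc, h, ← mul_assoc, ih, mul_assoc]
  induction p using Polynomial.induction_on' with
  | add p q hp hq => simp [map_add, add_mul, mul_add, hp, hq]
  | monomial k c =>
    simp only [aeval_monomial]
    rw [mul_assoc, hpow k, ← mul_assoc, Algebra.commutes c W, mul_assoc]

/-- Uniqueness for the Sylvester-type equation: if `A * W = W * B` and the spectra of
`A` and `B` are disjoint, then `W = 0`. -/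
lemma sylvester_eq_zero {n : ℕ} (hn : 0 < n) (A B W : Matrix (Fin n) (Fin n) ℂ)
    (h : A * W = W * B) (hdisj : ∀ μ : ℂ, μ ∈ spectrum ℂ A → μ ∉ spectrum ℂ B) :
    W = 0 := by
  have : Nonempty (Fin n) := ⟨⟨0, hn⟩⟩
  set p := B.charpoly with hp
  have h0 : (aeval A p) * W = 0 := by
    rw [aeval_mul_eq_mul_aeval A B W h p, hp, Matrix.aeval_self_charpoly, mul_zero]
  have hdeg : 0 < p.degree := by
    rw [hp, Matrix.charpoly_degree_eq_dim, Fintype.card_fin]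
    exact_mod_cast hn
  have hunit : IsUnit (aeval A p) := by
    rw [← spectrum.zero_notMem_iff ℂ]
    rw [spectrum.map_polynomial_aeval_of_degree_pos A p hdeg]
    rintro ⟨μ, hμ, hev⟩
    have : μ ∈ spectrum ℂ B := (mem_spectrum_iff_isRoot_charpoly B μ).mpr hev
    exact hdisj μ hμ this
  calc W = (↑hunit.unit⁻¹ : Matrix (Fin n) (Fin n) ℂ) * ((aeval A p) * W) := by
        rw [← mul_assoc, IsUnit.val_inv_mul, one_mul]
    _ = 0 := by rw [h0, mul_zero]

/-- If `col(X₁, Ψ₁)` spans an invariant subspace of the Hamiltonian matrix `R`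
with `Λ` and `-Λ*` having no common eigenvalue, and `X₁` is invertible, then
`H = Ψ₁·X₁⁻¹` is Hermitian. -/
theorem riccati_solution_isHermitian (n m : ℕ) (hn : 0 < n) (hm : 0 < m)
    (A G : Matrix (Fin n) (Fin n) ℂ) (B : Matrix (Fin n) (Fin m) ℂ)
    (Γ : Matrix (Fin m) (Fin m) ℂ) (hG : G.IsHermitian) (hΓ : Γ.IsHermitian)
    (hΓinv : IsUnit Γ.det)
    (X₁ Ψ₁ Λ : Matrix (Fin n) (Fin n) ℂ)
    (hinv : IsUnit X₁.det)
    (hZ : (Matrix.fromBlocks A (-(B * Γ⁻¹ * Bᴴ)) (-G) (-Aᴴ)) * (Matrix.fromRows X₁ Ψ₁)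
        = (Matrix.fromRows X₁ Ψ₁) * Λ)
    (hdisj : ∀ μ : ℂ, μ ∈ spectrum ℂ Λ → μ ∉ spectrum ℂ (-Λᴴ)) :
    (Ψ₁ * X₁⁻¹).IsHermitian := by
  set S : Matrix (Fin n) (Fin n) ℂ := B * Γ⁻¹ * Bᴴ with hSdef
  have hS : Sᴴ = S := by
    rw [hSdef]
    simp only [Matrix.conjTranspose_mul, Matrix.conjTranspose_conjTranspose,
      Matrix.conjTranspose_nonsing_inv, hΓ.eq, Matrix.mul_assoc]
  -- extract the two block equations
  rw [Matrix.fromBlocks_mul_fromRows, Matrix.fromRows_mul,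
    Matrix.fromRows_ext_iff] at hZ
  obtain ⟨eq1, eq2⟩ := hZ
  have eq1 : A * X₁ - S * Ψ₁ = X₁ * Λ := by rw [← eq1]; noncomm_ring
  have eq2 : -(G * X₁) - Aᴴ * Ψ₁ = Ψ₁ * Λ := by rw [← eq2]; noncomm_ring
  -- the "symplectic defect"
  set W : Matrix (Fin n) (Fin n) ℂ := Ψ₁ᴴ * X₁ - X₁ᴴ * Ψ₁ with hWdef
  have key : (-Λᴴ) * W = W * Λ := by
    have hWΛ : W * Λ = Ψ₁ᴴ * (X₁ * Λ) - X₁ᴴ * (Ψ₁ * Λ) := by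
      rw [hWdef, sub_mul, Matrix.mul_assoc, Matrix.mul_assoc]
    rw [hWΛ, ← eq1, ← eq2, hWdef]
    have hΛΨ : Λᴴ * Ψ₁ᴴ = (-(G * X₁) - Aᴴ * Ψ₁)ᴴ := by rw [eq2]; simp
    have hΛX : Λᴴ * X₁ᴴ = (A * X₁ - S * Ψ₁)ᴴ := by rw [eq1]; simp
    rw [neg_mul, mul_sub, ← mul_assoc, ← mul_assoc, hΛΨ, hΛX]
    simp only [Matrix.conjTranspose_sub, Matrix.conjTranspose_neg,
      Matrix.conjTranspose_mul, Matrix.conjTranspose_conjTranspose, hS, hG.eq]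
    noncomm_ring
  have hW0 : W = 0 := by
    refine sylvester_eq_zero hn (-Λᴴ) Λ W key ?_
    intro μ hμ hμ'
    exact hdisj μ hμ' hμ
  have hWeq : Ψ₁ᴴ * X₁ = X₁ᴴ * Ψ₁ := by
    have := hW0
    rw [hWdef, sub_eq_zero] at this
    exact this
  -- conclude hermitianity
  have hinvH : IsUnit (X₁ᴴ).det := by
    rw [Matrix.det_conjTranspose]
    exact hinv.star
  show (Ψ₁ * X₁⁻¹)ᴴ = Ψ₁ * X₁⁻¹
  rw [Matrix.conjTranspose_mul, Matrix.conjTranspose_nonsing_inv]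
  have := congrArg (fun M => (X₁ᴴ)⁻¹ * M * X₁⁻¹) hWeq
  simp only [← Matrix.mul_assoc] at this
  rw [Matrix.mul_nonsing_inv_cancel_right X₁ _ hinv,
    Matrix.nonsing_inv_mul (X₁ᴴ) hinvH, Matrix.one_mul] at this
  exact this
end

section
/- Let A, G be n×n complex matrices, B an n×m complex matrix, Γ an invertible m×m complex matrix, and let R be the 2n×2n block matrix [[A, -BΓ⁻¹B*],[-G, -A*]]. Suppose X₁, Ψ₁, Λ are n×n complex matrices such that R·col(X₁, Ψ₁) = col(X₁, Ψ₁)·Λ and X₁ is invertible, and set H = Ψ₁·X₁⁻¹. Then A - B·Γ⁻¹·B*·H = X₁·Λ·X₁⁻¹. In particular, if Λ is Hurwitz then A - B·Γ⁻¹·B*·H is Hurwitz, i.e., H is a stabilizing solution of the Riccati equation. -/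
open Matrix

/-- With `H = Ψ₁·X₁⁻¹`, one has `A - B·Γ⁻¹·B*·H = X₁·Λ·X₁⁻¹`; in particular if
`Λ` is Hurwitz then so is `A - B·Γ⁻¹·B*·H`, i.e. `H` is a stabilizing
solution. -/
theorem closed_loop_similar_and_stabilizing (n m : ℕ) (hn : 0 < n) (hm : 0 < m)
    (A G : Matrix (Fin n) (Fin n) ℂ) (B : Matrix (Fin n) (Fin m) ℂ)
    (Γ : Matrix (Fin m) (Fin m) ℂ) (hΓinv : IsUnit Γ.det)
    (X₁ Ψ₁ Λ : Matrix (Fin n) (Fin n) ℂ)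
    (hinv : IsUnit X₁.det)
    (hZ : (Matrix.fromBlocks A (-(B * Γ⁻¹ * Bᴴ)) (-G) (-Aᴴ)) * (Matrix.fromRows X₁ Ψ₁)
        = (Matrix.fromRows X₁ Ψ₁) * Λ)
    (H : Matrix (Fin n) (Fin n) ℂ) (hH : H = Ψ₁ * X₁⁻¹) :
    A - B * Γ⁻¹ * Bᴴ * H = X₁ * Λ * X₁⁻¹ ∧
      ((∀ μ ∈ spectrum ℂ Λ, μ.re < 0) →
        ∀ μ ∈ spectrum ℂ (A - B * Γ⁻¹ * Bᴴ * H), μ.re < 0) := by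
  rw [Matrix.fromBlocks_mul_fromRows, Matrix.fromRows_mul] at hZ
  have htop : A * X₁ + (-(B * Γ⁻¹ * Bᴴ)) * Ψ₁ = X₁ * Λ := by
    have := congrArg Matrix.toRows₁ hZ
    simpa using this
  have hX : IsUnit X₁ := (Matrix.isUnit_iff_isUnit_det _).mpr hinv
  have hmain : A - B * Γ⁻¹ * Bᴴ * H = X₁ * Λ * X₁⁻¹ := by
    have h1 : (A * X₁ + (-(B * Γ⁻¹ * Bᴴ)) * Ψ₁) * X₁⁻¹ = X₁ * Λ * X₁⁻¹ := by
      rw [htop]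
    rw [add_mul, mul_assoc A, Matrix.mul_nonsing_inv _ hinv, mul_one,
      mul_assoc] at h1
    rw [hH]
    rw [sub_eq_add_neg, ← neg_mul]
    exact h1
  refine ⟨hmain, fun hΛ μ hμ => ?_⟩
  rw [hmain] at hμ
  have hrw : X₁ * Λ * X₁⁻¹ = (hX.unit : Matrix (Fin n) (Fin n) ℂ) * Λ * ((hX.unit⁻¹ : (Matrix (Fin n) (Fin n) ℂ)ˣ) : Matrix (Fin n) (Fin n) ℂ) := by
    rw [Matrix.coe_units_inv, hX.unit_spec]
  rw [hrw, spectrum.units_conjugate] at hμ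
  exact hΛ μ hμ
end

section
/- Let A, G be n×n complex matrices, B an n×m complex matrix, Γ an invertible m×m complex matrix, and let V₁, V₂ be n×k complex matrices. Suppose H is an n×n Hermitian complex matrix satisfying the modified Riccati equation H·(A - V₁V₂*) + (A - V₁V₂*)*·H + G + V₂V₂* - H·B·Γ⁻¹·B*·H + H·V₁V₁*·H = 0. Then H·A + A*·H + G - H·B·Γ⁻¹·B*·H = -(V₂ - H·V₁)·(V₂ - H·V₁)*, and in particular H·A + A*·H + G - H·B·Γ⁻¹·B*·H is negative semidefinite. -/
open Matrix
open scoped ComplexOrder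

/-- A Hermitian solution of the modified Riccati equation makes the Riccati
expression equal to `-(V₂ - H·V₁)(V₂ - H·V₁)*`, hence negative semidefinite. -/
theorem riccati_special_transformation (n m k : ℕ) (hn : 0 < n) (hm : 0 < m) (hk : 0 < k)
    (A G : Matrix (Fin n) (Fin n) ℂ) (B : Matrix (Fin n) (Fin m) ℂ)
    (Γ : Matrix (Fin m) (Fin m) ℂ) (hΓinv : IsUnit Γ.det)
    (V₁ V₂ : Matrix (Fin n) (Fin k) ℂ)
    (H : Matrix (Fin n) (Fin n) ℂ) (hH : H.IsHermitian)
    (hEq : H * (A - V₁ * V₂ᴴ) + (A - V₁ * V₂ᴴ)ᴴ * H + G + V₂ * V₂ᴴ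
        - H * B * Γ⁻¹ * Bᴴ * H + H * V₁ * V₁ᴴ * H = 0) :
    H * A + Aᴴ * H + G - H * B * Γ⁻¹ * Bᴴ * H
        = -((V₂ - H * V₁) * (V₂ - H * V₁)ᴴ) ∧
      (-(H * A + Aᴴ * H + G - H * B * Γ⁻¹ * Bᴴ * H)).PosSemidef := by
  have hHH : Hᴴ = H := hH.eq
  have key : H * A + Aᴴ * H + G - H * B * Γ⁻¹ * Bᴴ * H
      = -((V₂ - H * V₁) * (V₂ - H * V₁)ᴴ) := by
    simp only [conjTranspose_sub, conjTranspose_mul, conjTranspose_conjTranspose, hHH]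
      at hEq ⊢
    rw [← sub_eq_zero, ← hEq]
    simp only [Matrix.mul_sub, Matrix.sub_mul, Matrix.mul_assoc]
    abel
  exact ⟨key, by rw [key, neg_neg]; exact posSemidef_self_mul_conjTranspose _⟩
end

section
/- Let A, G be n×n complex matrices with G Hermitian, B an n×m complex matrix, and Γ a positive definite Hermitian m×m complex matrix. Then for every Hermitian n×n matrix H, the following are equivalent: (i) for all (x, ξ) ∈ ℂⁿ × ℂᵐ with (x, ξ) ≠ 0, one has 2·Re(x*·H·(A·x + B·ξ)) + x*·G·x - ξ*·Γ·ξ < 0; (ii) H·A + A*·H + G + H·B·Γ⁻¹·B*·H ≺ 0 (negative definite). -/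
open Matrix
open scoped ComplexOrder

/-!
Completing the square in `ξ`: with `K = Γ⁻¹BᴴH` and `R` the Riccati matrix, the quadratic form
equals `x*Rx - (ξ - Kx)*Γ(ξ - Kx)`. Taking `ξ = Kx` shows that `R` must be negative definite;
conversely, if `R ≺ 0` and `Γ ≻ 0` both terms are negative unless `x = 0`, in which case the form
is `-ξ*Γξ < 0`.
-/

namespace Matrix

variable {ι κ 𝕜 : Type*} [Fintype ι] [Fintype κ] [RCLike 𝕜]

lemma IsHermitian.posDef_iff_re_dotProduct_mulVec_pos {M : Matrix ι ι 𝕜} (hM : M.IsHermitian) :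
    M.PosDef ↔ ∀ x : ι → 𝕜, x ≠ 0 → 0 < RCLike.re (star x ⬝ᵥ (M *ᵥ x)) :=
  ⟨fun h _ hx => h.re_dotProduct_pos hx, fun h => .of_dotProduct_mulVec_pos hM fun x hx =>
    RCLike.pos_iff.mpr ⟨h x hx, hM.im_star_dotProduct_mulVec_self x⟩⟩

lemma re_dotProduct_conjTranspose_mulVec (M : Matrix ι κ 𝕜) (x : ι → 𝕜) (y : κ → 𝕜) :
    RCLike.re (star y ⬝ᵥ (Mᴴ *ᵥ x)) = RCLike.re (star x ⬝ᵥ (M *ᵥ y)) := by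
  rw [star_dotProduct, star_mulVec, ← dotProduct_mulVec, conjTranspose_conjTranspose,
    RCLike.star_def, RCLike.conj_re]

lemma re_star_dotProduct_comm (x y : ι → 𝕜) :
    RCLike.re (star x ⬝ᵥ y) = RCLike.re (star y ⬝ᵥ x) := by
  rw [star_dotProduct, RCLike.star_def, RCLike.conj_re]

lemma two_mul_re_dotProduct_mulVec (M : Matrix ι ι 𝕜) (x : ι → 𝕜) :
    2 * RCLike.re (star x ⬝ᵥ (M *ᵥ x)) = RCLike.re (star x ⬝ᵥ ((M + Mᴴ) *ᵥ x)) := by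
  rw [add_mulVec, dotProduct_add, map_add, re_dotProduct_conjTranspose_mulVec]
  ring

variable [DecidableEq κ]

lemma IsHermitian.re_dotProduct_mulVec_sub_inv_mulVec {Γ : Matrix κ κ 𝕜} (hΓ : Γ.IsHermitian)
    (hdet : IsUnit Γ.det) (ξ w : κ → 𝕜) :
    RCLike.re (star (ξ - Γ⁻¹ *ᵥ w) ⬝ᵥ (Γ *ᵥ (ξ - Γ⁻¹ *ᵥ w))) =
      RCLike.re (star ξ ⬝ᵥ (Γ *ᵥ ξ)) - 2 * RCLike.re (star w ⬝ᵥ ξ) +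
        RCLike.re (star w ⬝ᵥ (Γ⁻¹ *ᵥ w)) := by
  have hcancel : Γ *ᵥ (Γ⁻¹ *ᵥ w) = w := by rw [mulVec_mulVec, mul_nonsing_inv _ hdet, one_mulVec]
  have hcross : RCLike.re (star (Γ⁻¹ *ᵥ w) ⬝ᵥ (Γ *ᵥ ξ)) = RCLike.re (star w ⬝ᵥ ξ) := by
    have h := re_dotProduct_conjTranspose_mulVec Γ ξ (Γ⁻¹ *ᵥ w)
    rw [hΓ.eq, hcancel] at h
    rw [h, re_star_dotProduct_comm]
  simp only [mulVec_sub, star_sub, sub_dotProduct, dotProduct_sub, map_sub, hcancel, hcross,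
    re_star_dotProduct_comm ξ w, re_star_dotProduct_comm (Γ⁻¹ *ᵥ w) w]
  ring

noncomputable def riccatiMatrix (A G : Matrix ι ι 𝕜) (B : Matrix ι κ 𝕜) (Γ : Matrix κ κ 𝕜)
    (H : Matrix ι ι 𝕜) : Matrix ι ι 𝕜 :=
  H * A + Aᴴ * H + G + H * B * Γ⁻¹ * Bᴴ * H

lemma isHermitian_riccatiMatrix {A G H : Matrix ι ι 𝕜} {B : Matrix ι κ 𝕜} {Γ : Matrix κ κ 𝕜}
    (hG : G.IsHermitian) (hΓ : Γ.IsHermitian) (hH : H.IsHermitian) :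
    (riccatiMatrix A G B Γ H).IsHermitian := by
  simp only [riccatiMatrix, IsHermitian, conjTranspose_add, conjTranspose_mul,
    conjTranspose_conjTranspose, hH.eq, hG.eq, hΓ.inv.eq, Matrix.mul_assoc]
  abel

lemma quadraticForm_eq_riccatiMatrix_sub_square {A G H : Matrix ι ι 𝕜} {B : Matrix ι κ 𝕜}
    {Γ : Matrix κ κ 𝕜} (hΓ : Γ.IsHermitian) (hdet : IsUnit Γ.det) (hH : H.IsHermitian)
    (x : ι → 𝕜) (ξ : κ → 𝕜) :
    2 * RCLike.re (star x ⬝ᵥ (H *ᵥ (A *ᵥ x + B *ᵥ ξ))) + RCLike.re (star x ⬝ᵥ (G *ᵥ x))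
        - RCLike.re (star ξ ⬝ᵥ (Γ *ᵥ ξ)) =
      RCLike.re (star x ⬝ᵥ (riccatiMatrix A G B Γ H *ᵥ x)) -
        RCLike.re (star (ξ - (Γ⁻¹ * Bᴴ * H) *ᵥ x) ⬝ᵥ (Γ *ᵥ (ξ - (Γ⁻¹ * Bᴴ * H) *ᵥ x))) := by
  set w := (Bᴴ * H) *ᵥ x
  have hK : (Γ⁻¹ * Bᴴ * H) *ᵥ x = Γ⁻¹ *ᵥ w := by rw [Matrix.mul_assoc, ← mulVec_mulVec]
  have hA : 2 * RCLike.re (star x ⬝ᵥ (H *ᵥ (A *ᵥ x))) =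
      RCLike.re (star x ⬝ᵥ ((H * A + Aᴴ * H) *ᵥ x)) := by
    rw [mulVec_mulVec, two_mul_re_dotProduct_mulVec, conjTranspose_mul, hH.eq]
  have hB : RCLike.re (star x ⬝ᵥ (H *ᵥ (B *ᵥ ξ))) = RCLike.re (star w ⬝ᵥ ξ) := by
    rw [mulVec_mulVec, ← re_dotProduct_conjTranspose_mulVec, conjTranspose_mul, hH.eq,
      re_star_dotProduct_comm]
  have hw : RCLike.re (star w ⬝ᵥ (Γ⁻¹ *ᵥ w)) =
      RCLike.re (star x ⬝ᵥ ((H * B * Γ⁻¹ * Bᴴ * H) *ᵥ x)) := by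
    simp only [w, star_mulVec, ← dotProduct_mulVec, conjTranspose_mul, conjTranspose_conjTranspose,
      hH.eq, mulVec_mulVec, Matrix.mul_assoc]
  rw [hK, hΓ.re_dotProduct_mulVec_sub_inv_mulVec hdet]
  simp only [riccatiMatrix, add_mulVec, mulVec_add, dotProduct_add, map_add] at hA ⊢
  linarith

theorem quadraticForm_neg_iff_posDef_neg_riccatiMatrix {A G H : Matrix ι ι 𝕜}
    {B : Matrix ι κ 𝕜} {Γ : Matrix κ κ 𝕜} (hG : G.IsHermitian) (hΓ : Γ.PosDef)
    (hH : H.IsHermitian) :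
    (∀ (x : ι → 𝕜) (ξ : κ → 𝕜), ¬(x = 0 ∧ ξ = 0) →
        2 * RCLike.re (star x ⬝ᵥ (H *ᵥ (A *ᵥ x + B *ᵥ ξ))) + RCLike.re (star x ⬝ᵥ (G *ᵥ x))
          - RCLike.re (star ξ ⬝ᵥ (Γ *ᵥ ξ)) < 0) ↔
      (-riccatiMatrix A G B Γ H).PosDef := by
  have hdet : IsUnit Γ.det := (isUnit_iff_isUnit_det Γ).1 hΓ.isUnit
  have hR := (isHermitian_riccatiMatrix (A := A) (B := B) hG hΓ.isHermitian hH).neg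
  simp_rw [quadraticForm_eq_riccatiMatrix_sub_square hΓ.isHermitian hdet hH,
    hR.posDef_iff_re_dotProduct_mulVec_pos,
    neg_mulVec, dotProduct_neg, map_neg, neg_pos]
  constructor
  · intro h x hx
    simpa using h x ((Γ⁻¹ * Bᴴ * H) *ᵥ x) (by simp [hx])
  · intro h x ξ hxξ
    by_cases hx : x = 0
    · subst hx
      have hξ : ξ ≠ 0 := fun hξ => hxξ ⟨rfl, hξ⟩
      simpa using hΓ.re_dotProduct_pos hξ
    · linarith [h x hx, hΓ.posSemidef.re_dotProduct_nonneg (ξ - (Γ⁻¹ * Bᴴ * H) *ᵥ x)]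

end Matrix

theorem quadratic_form_iff_riccati_general (n m : ℕ)
    (A G : Matrix (Fin n) (Fin n) ℂ) (B : Matrix (Fin n) (Fin m) ℂ)
    (Γ : Matrix (Fin m) (Fin m) ℂ) (hG : G.IsHermitian) (hΓ : Γ.PosDef)
    (H : Matrix (Fin n) (Fin n) ℂ) (hH : H.IsHermitian) :
    (∀ (x : Fin n → ℂ) (ξ : Fin m → ℂ), ¬(x = 0 ∧ ξ = 0) →
        2 * (star x ⬝ᵥ (H *ᵥ (A *ᵥ x + B *ᵥ ξ))).re
          + (star x ⬝ᵥ (G *ᵥ x)).re - (star ξ ⬝ᵥ (Γ *ᵥ ξ)).re < 0) ↔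
      (-(H * A + Aᴴ * H + G + H * B * Γ⁻¹ * Bᴴ * H)).PosDef :=
  quadraticForm_neg_iff_posDef_neg_riccatiMatrix hG hΓ hH

/-- For positive definite `Γ`, the quadratic-form condition
`2·Re(x*H(Ax+Bξ)) + x*Gx - ξ*Γξ < 0` for all nonzero `(x, ξ)` is equivalent to
the Riccati inequality `H·A + A*·H + G + H·B·Γ⁻¹·B*·H ≺ 0`. -/
theorem quadratic_form_iff_riccati (n m : ℕ) (hn : 0 < n) (hm : 0 < m)
    (A G : Matrix (Fin n) (Fin n) ℂ) (B : Matrix (Fin n) (Fin m) ℂ)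
    (Γ : Matrix (Fin m) (Fin m) ℂ) (hG : G.IsHermitian) (hΓ : Γ.PosDef)
    (H : Matrix (Fin n) (Fin n) ℂ) (hH : H.IsHermitian) :
    (∀ (x : Fin n → ℂ) (ξ : Fin m → ℂ), ¬(x = 0 ∧ ξ = 0) →
        2 * (star x ⬝ᵥ (H *ᵥ (A *ᵥ x + B *ᵥ ξ))).re
          + (star x ⬝ᵥ (G *ᵥ x)).re - (star ξ ⬝ᵥ (Γ *ᵥ ξ)).re < 0) ↔
      (-(H * A + Aᴴ * H + G + H * B * Γ⁻¹ * Bᴴ * H)).PosDef :=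
  quadratic_form_iff_riccati_general n m A G B Γ hG hΓ H hH
end

section
/- Let J be the 2n×2n complex block matrix [[0, -I],[I, 0]] and let R be a 2n×2n complex matrix such that J·R is Hermitian. Assume R has no purely imaginary eigenvalues. Then there exist an n×n complex matrix Λ all of whose eigenvalues have negative real part (Λ is Hurwitz) and a 2n×n complex matrix Z of rank n such that R·Z = Z·Λ; that is, the R-invariant subspace associated with the eigenvalues of R having negative real part has dimension exactly n. -/
/-!
From `(J R)ᴴ = J R` and `Jᴴ = -J` one gets `J (-R) = Rᴴ J`, so `Rᴴ` is similar to `-R`.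
Choose `p` with all roots in the open left half-plane such that `χ_R ∣ p · p̃`, where
`p̃(z) = conj (p (-conj z))` has the mirrored roots; `p` and `p̃` are coprime, so
`ℂ²ⁿ = ker p(R) ⊕ ker p̃(R)`. The similarity gives `p(R)ᴴ J = J p̃(R)`, hence `p(R)` and `p̃(R)`
have the same rank and both kernels have dimension `n`. Any basis of the `R`-invariant subspace
`ker p(R)` gives `Z` and `Λ`, and every eigenvalue of `Λ` is a root of `p`.
-/

open Matrix Polynomial Module

theorem SemiconjBy.aeval {R A : Type*} [CommSemiring R] [Semiring A] [Algebra R A] {a x y : A}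
    (h : SemiconjBy a x y) (p : R[X]) : SemiconjBy a (aeval x p) (aeval y p) := by
  induction p using Polynomial.induction_on' with
  | add p q hp hq => simpa only [map_add] using hp.add_right hq
  | monomial k c =>
    have hc : SemiconjBy a (algebraMap R A c) (algebraMap R A c) := (Algebra.commutes c a).symm
    simpa only [aeval_monomial] using hc.mul_right (h.pow_right k)

theorem Matrix.conjTranspose_aeval {m R : Type*} [Fintype m] [DecidableEq m] [CommSemiring R]
    [StarRing R] (A : Matrix m m R) (p : R[X]) :
    (aeval A p)ᴴ = aeval Aᴴ (p.map (starRingEnd R)) := by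
  induction p using Polynomial.induction_on' with
  | add p q hp hq => simp only [map_add, conjTranspose_add, hp, hq, Polynomial.map_add]
  | monomial k c =>
    simp only [aeval_monomial, Algebra.algebraMap_eq_smul_one, Algebra.smul_mul_assoc, one_mul,
      conjTranspose_smul, conjTranspose_pow, map_monomial]
    rfl

theorem Matrix.IsHermitian.semiconjBy_neg {m R : Type*} [Fintype m] [Ring R] [StarRing R]
    {J A : Matrix m m R} (hJ : Jᴴ = -J) (h : (J * A).IsHermitian) : SemiconjBy J (-A) Aᴴ := by
  have h' := h.eq
  rw [conjTranspose_mul, hJ] at h'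
  simp only [SemiconjBy, mul_neg, ← h', neg_neg]

namespace Polynomial

/-- `conjReflect p` is `z ↦ conj (p (-conj z))`: its roots are those of `p` mirrored in the
imaginary axis. -/
noncomputable def conjReflect : ℂ[X] →+* ℂ[X] :=
  (compRingHom (-X)).comp (mapRingHom (starRingEnd ℂ))

theorem conjReflect_apply (p : ℂ[X]) : conjReflect p = (p.map (starRingEnd ℂ)).comp (-X) := rfl

theorem eval_conjReflect (p : ℂ[X]) (z : ℂ) :
    (conjReflect p).eval z = starRingEnd ℂ (p.eval (-starRingEnd ℂ z)) := by
  rw [conjReflect_apply, eval_comp, eval_neg, eval_X, eval_map,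
    show -z = starRingEnd ℂ (-starRingEnd ℂ z) by simp, eval₂_at_apply]

theorem exists_dvd_mul_conjReflect {q : ℂ[X]} (hq : q.Monic) (hre : ∀ z ∈ q.roots, z.re ≠ 0) :
    ∃ p : ℂ[X], (∀ z, p.IsRoot z → z.re < 0) ∧ q ∣ p * conjReflect p := by
  -- `s z` is whichever of `z` and its mirror image `-conj z` lies in the left half-plane
  let s : ℂ → ℂ := fun z => if z.re < 0 then z else -starRingEnd ℂ z
  have hs_re : ∀ z ∈ q.roots, (s z).re < 0 := by
    intro z hz
    by_cases h : z.re < 0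
    · simp [s, h]
    · simp only [s, h, if_false, Complex.neg_re, Complex.conj_re]
      exact neg_neg_of_pos (lt_of_le_of_ne (not_lt.mp h) (hre z hz).symm)
  have hs : ∀ z, z = s z ∨ -starRingEnd ℂ z = s z := by
    intro z
    by_cases h : z.re < 0 <;> simp [s, h]
  refine ⟨(q.roots.map fun z => X - C (s z)).prod, ?_, ?_⟩
  · intro w hw
    simp only [IsRoot, eval_multiset_prod, Multiset.prod_eq_zero_iff, Multiset.map_map,
      Function.comp_def, eval_sub, eval_X, eval_C, Multiset.mem_map, sub_eq_zero] at hw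
    obtain ⟨z, hz, rfl⟩ := hw
    exact hs_re z hz
  · conv_lhs => rw [(IsAlgClosed.splits q).eq_prod_roots_of_monic hq]
    rw [map_multiset_prod, Multiset.map_map, ← Multiset.prod_map_mul]
    refine Multiset.prod_dvd_prod_of_dvd _ _ fun z _ => ?_
    rw [dvd_iff_isRoot, IsRoot, eval_mul, Function.comp_apply, eval_conjReflect]
    rcases hs z with h | h <;> simp [← h]

theorem isCoprime_conjReflect {p : ℂ[X]} (hp : ∀ z, p.IsRoot z → z.re < 0) :
    IsCoprime p (conjReflect p) := by
  rw [isCoprime_iff_aeval_ne_zero_of_isAlgClosed (k := ℂ) ℂ]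
  intro z
  by_contra! h
  simp only [coe_aeval_eq_eval, eval_conjReflect, map_eq_zero] at h
  have h1 := hp z h.1
  have h2 := hp _ h.2
  simp only [Complex.neg_re, Complex.conj_re] at h2
  linarith

end Polynomial

theorem Matrix.rank_aeval_conjReflect {m : Type*} [Fintype m] [DecidableEq m]
    {J R : Matrix m m ℂ} (hJ : IsUnit J.det) (h : SemiconjBy J (-R) Rᴴ) (p : ℂ[X]) :
    (aeval R (conjReflect p)).rank = (aeval R p).rank := by
  open ComplexOrder in
  calc (aeval R (conjReflect p)).rank = (J * aeval (-R) (p.map (starRingEnd ℂ))).rank := by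
        rw [rank_mul_eq_right_of_isUnit_det _ _ hJ, conjReflect_apply, aeval_comp]
        simp
    _ = ((aeval R p)ᴴ * J).rank := by rw [(h.aeval _).eq, conjTranspose_aeval]
    _ = (aeval R p).rank := by rw [rank_mul_eq_left_of_isUnit_det _ _ hJ, rank_conjTranspose]

theorem Module.End.finrank_ker_aeval_add_of_isCoprime {K M : Type*} [Field K] [AddCommGroup M]
    [Module K M] [FiniteDimensional K M] (f : End K M) {p q : K[X]} (hpq : IsCoprime p q)
    (h : aeval f (p * q) = 0) :
    finrank K (LinearMap.ker (aeval f p)) + finrank K (LinearMap.ker (aeval f q)) =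
      finrank K M :=
  Submodule.finrank_add_eq_of_isCompl ⟨disjoint_ker_aeval_of_isCoprime f hpq,
    codisjoint_iff.mpr (by rw [sup_ker_aeval_eq_ker_aeval_mul_of_coprime f hpq, h,
      LinearMap.ker_zero])⟩

namespace Matrix

variable {K m : Type*} [Field K] [Fintype m] [DecidableEq m]

theorem aeval_toLin' (R : Matrix m m K) (p : K[X]) : aeval (toLin' R) p = toLin' (aeval R p) :=
  aeval_algHom_apply (toLinAlgEquiv' : Matrix m m K ≃ₐ[K] End K (m → K)).toAlgHom R p

theorem rank_add_finrank_ker_toLin' (A : Matrix m m K) :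
    A.rank + finrank K (LinearMap.ker (toLin' A)) = Fintype.card m := by
  rw [rank, ← toLin'_apply', LinearMap.finrank_range_add_finrank_ker, finrank_fintype_fun_eq_card]

theorem mulVec_mem_ker_aeval_toLin' (R : Matrix m m K) (p : K[X]) {v : m → K}
    (hv : v ∈ LinearMap.ker (aeval (toLin' R) p)) :
    R *ᵥ v ∈ LinearMap.ker (aeval (toLin' R) p) := by
  rw [LinearMap.mem_ker] at hv ⊢
  rw [← toLin'_apply, ← End.mul_apply, ← ((Commute.refl (toLin' R)).aeval p).eq, End.mul_apply,
    hv, map_zero]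

theorem exists_mul_eq_mul_of_invariant (R : Matrix m m K) {V : Submodule K (m → K)}
    (hV : ∀ v ∈ V, R *ᵥ v ∈ V) {k : ℕ} (hk : finrank K V = k) :
    ∃ (Λ : Matrix (Fin k) (Fin k) K) (Z : Matrix m (Fin k) K),
      Function.Injective Z.mulVec ∧ (∀ v, Z *ᵥ v ∈ V) ∧ R * Z = Z * Λ := by
  let e := (finBasisOfFinrankEq K V hk).equivFun
  let g : End K V := (toLin' R).restrict hV
  refine ⟨LinearMap.toMatrix' (e.toLinearMap ∘ₗ g ∘ₗ e.symm.toLinearMap),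
    LinearMap.toMatrix' (V.subtype ∘ₗ e.symm.toLinearMap), ?_, ?_, ?_⟩
  · intro v w h
    simpa [LinearMap.toMatrix'_mulVec] using h
  · simp [LinearMap.toMatrix'_mulVec]
  · apply toLin'.injective
    ext v
    simp only [toLin'_mul, toLin'_toMatrix', LinearMap.coe_comp, Submodule.coe_subtype,
      LinearEquiv.coe_coe, LinearMap.coe_single, Function.comp_apply, toLin'_apply,
      LinearEquiv.symm_apply_apply, g]
    rfl

theorem isRoot_of_mem_spectrum_of_mul_eq_mul {k : Type*} [Fintype k] [DecidableEq k]
    {R : Matrix m m K} {Z : Matrix m k K} {Λ : Matrix k k K} (hZ : Function.Injective Z.mulVec)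
    (hRZ : R * Z = Z * Λ) {p : K[X]} (hp : ∀ v, Z *ᵥ v ∈ LinearMap.ker (aeval (toLin' R) p))
    {μ : K} (hμ : μ ∈ spectrum K Λ) : p.IsRoot μ := by
  rw [← spectrum_toLin', ← End.hasEigenvalue_iff_mem_spectrum] at hμ
  obtain ⟨v, hv⟩ := hμ.exists_hasEigenvector
  have hw : End.HasEigenvector (toLin' R) μ (Z *ᵥ v) := by
    refine End.hasEigenvector_iff.mpr ⟨?_, fun h => hv.2 (hZ (by rwa [mulVec_zero]))⟩
    rw [End.mem_eigenspace_iff, toLin'_apply, mulVec_mulVec, hRZ, ← mulVec_mulVec,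
      ← toLin'_apply Λ, hv.apply_eq_smul, mulVec_smul]
  have h := End.aeval_apply_of_hasEigenvector (p := p) hw
  rw [hp v, eq_comm, smul_eq_zero] at h
  exact h.resolve_right hw.2

end Matrix

theorem hamiltonian_stable_subspace_general (n : ℕ)
    (R : Matrix (Fin n ⊕ Fin n) (Fin n ⊕ Fin n) ℂ)
    (hR : ((Matrix.fromBlocks 0 (-1) 1 0 : Matrix (Fin n ⊕ Fin n) (Fin n ⊕ Fin n) ℂ)
        * R).IsHermitian)
    (hspec : ∀ lam ∈ spectrum ℂ R, lam.re ≠ 0) :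
    ∃ (Λ : Matrix (Fin n) (Fin n) ℂ) (Z : Matrix (Fin n ⊕ Fin n) (Fin n) ℂ),
      (∀ μ ∈ spectrum ℂ Λ, μ.re < 0) ∧ Z.rank = n ∧ R * Z = Z * Λ := by
  set J : Matrix (Fin n ⊕ Fin n) (Fin n ⊕ Fin n) ℂ := fromBlocks 0 (-1) 1 0
  have hJ : Jᴴ = -J := by simp [J, fromBlocks_conjTranspose, fromBlocks_neg]
  have hJdet : IsUnit J.det := by
    refine isUnit_det_of_right_inverse (B := -J) ?_
    simp [J, fromBlocks_multiply, fromBlocks_neg, ← fromBlocks_one]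
  obtain ⟨p, hp, hdvd⟩ := exists_dvd_mul_conjReflect R.charpoly_monic fun z hz =>
    hspec z (mem_spectrum_iff_isRoot_charpoly.mpr (isRoot_of_mem_roots hz))
  have hkill : aeval (toLin' R) (p * conjReflect p) = 0 := by
    obtain ⟨c, hc⟩ := hdvd
    rw [hc, aeval_toLin', map_mul, aeval_self_charpoly, zero_mul, map_zero]
  have hsum := End.finrank_ker_aeval_add_of_isCoprime _ (isCoprime_conjReflect hp) hkill
  have hrank := rank_aeval_conjReflect hJdet (hR.semiconjBy_neg hJ) p
  have hker := rank_add_finrank_ker_toLin' (aeval R p)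
  have hker' := rank_add_finrank_ker_toLin' (aeval R (conjReflect p))
  rw [← aeval_toLin'] at hker hker'
  have hdim : finrank ℂ (LinearMap.ker (aeval (toLin' R) p)) = n := by
    simp only [finrank_fintype_fun_eq_card, Fintype.card_sum, Fintype.card_fin] at hsum hker hker'
    omega
  obtain ⟨Λ, Z, hZ, hZV, hRZ⟩ :=
    exists_mul_eq_mul_of_invariant R (fun v => mulVec_mem_ker_aeval_toLin' R p) hdim
  refine ⟨Λ, Z, fun μ hμ => hp μ (isRoot_of_mem_spectrum_of_mul_eq_mul hZ hRZ hZV hμ), ?_, hRZ⟩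
  rw [rank, LinearMap.finrank_range_of_inj hZ, finrank_fin_fun]

/-- If a J-Hamiltonian matrix `R` has no purely imaginary eigenvalues, then its
stable invariant subspace has dimension exactly `n`: there exist a Hurwitz
`n×n` matrix `Λ` and a `2n×n` matrix `Z` of rank `n` with `R·Z = Z·Λ`. -/
theorem hamiltonian_stable_subspace (n : ℕ) (hn : 0 < n)
    (R : Matrix (Fin n ⊕ Fin n) (Fin n ⊕ Fin n) ℂ)
    (hR : ((Matrix.fromBlocks 0 (-1) 1 0 : Matrix (Fin n ⊕ Fin n) (Fin n ⊕ Fin n) ℂ)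
        * R).IsHermitian)
    (hspec : ∀ lam ∈ spectrum ℂ R, lam.re ≠ 0) :
    ∃ (Λ : Matrix (Fin n) (Fin n) ℂ) (Z : Matrix (Fin n ⊕ Fin n) (Fin n) ℂ),
      (∀ μ ∈ spectrum ℂ Λ, μ.re < 0) ∧ Z.rank = n ∧ R * Z = Z * Λ :=
  hamiltonian_stable_subspace_general n R hR hspec
end
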